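/- Fix b > a > 0 and let π = (a/(a+b))δ_{(-a,-b,-b)} + ((b-a)/(a+b))δ_{(-a,a,0)} + (a/(a+b))δ_{(b,a,b)} on ℝ³. Then ∭ (1/2)(|z−x|² + |z−y|²) dπ(x,y,z) = ab(b−a)/(a+b). -/

import Mathlib

open MeasureTheory

/-- The discrete 3-plan `π` on `ℝ³`. -/
noncomputable def piAB (a b : ℝ) : Measure (ℝ × ℝ × ℝ) :=
  ENNReal.ofReal (a / (a + b)) • Measure.dirac (-a, -b, -b) +
    ENNReal.ofReal ((b - a) / (a + b)) • Measure.dirac (-a, a, 0) +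
    ENNReal.ofReal (a / (a + b)) • Measure.dirac (b, a, b)

theorem stmt9 (a b : ℝ) (ha : 0 < a) (hab : a < b) :
    ∫ p : ℝ × ℝ × ℝ, (1 / 2 : ℝ) * (|p.2.2 - p.1| ^ 2 + |p.2.2 - p.2.1| ^ 2) ∂(piAB a b)
      = a * b * (b - a) / (a + b) := by
  have hf : StronglyMeasurable fun p : ℝ × ℝ × ℝ =>
      (1 / 2 : ℝ) * (|p.2.2 - p.1| ^ 2 + |p.2.2 - p.2.1| ^ 2) := by
    refine Continuous.stronglyMeasurable ?_
    fun_prop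
  have hint : ∀ (x : ℝ × ℝ × ℝ) (c : ℝ), Integrable
      (fun p : ℝ × ℝ × ℝ => (1 / 2 : ℝ) * (|p.2.2 - p.1| ^ 2 + |p.2.2 - p.2.1| ^ 2))
      (ENNReal.ofReal c • Measure.dirac x) := by
    intro x c
    refine Integrable.smul_measure ?_ ENNReal.ofReal_ne_top
    refine ⟨hf.aestronglyMeasurable, ?_⟩
    rw [HasFiniteIntegral, lintegral_dirac' _ (hf.measurable.enorm)]
    exact ENNReal.coe_lt_top
  rw [piAB, integral_add_measure (((hint _ _).add_measure (hint _ _))) (hint _ _),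
    integral_add_measure (hint _ _) (hint _ _)]
  simp only [integral_smul_measure, integral_dirac' _ _ hf]
  have h1 : (0:ℝ) < a + b := by linarith
  rw [ENNReal.toReal_ofReal (div_nonneg ha.le h1.le),
    ENNReal.toReal_ofReal (div_nonneg (by linarith) h1.le)]
  simp only [smul_eq_mul]
  rw [abs_of_nonpos (by linarith), abs_of_nonpos (by linarith), abs_of_nonneg (by linarith),
    abs_of_nonpos (by linarith), abs_of_nonneg (by linarith), abs_of_nonneg (by linarith)]
  field_simp
  ring
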